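/- arXiv:1702.03125 — 4 statements merged into one kernel-verified Lean document; each statement's English description precedes it below -/
import Mathlib

section
/- Let S = {s_1, ..., s_m} ⊆ Z^n and suppose over some field k the kernel of k[y_1,...,y_m] → k[Z^n], y_i ↦ x^{s_i}, is generated by binomials y^{b_1}−y^{c_1}, ..., y^{b_l}−y^{c_l}. Then over any other field k' the same binomials generate the corresponding toric ideal (the kernel of the analogous map over k'). -/
/-!
Write `σ u = ∑ uᵢ • sᵢ`, so that the toric map is `mapDomain σ : k[ℕᵐ] → k[ℤⁿ]`. For any additive
monoid hom `φ`, the kernel of `mapDomain φ` is spanned by the binomials `x^u - x^v` with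
`φ u = φ v`; and the ideal generated by the `y^{bⱼ} - y^{cⱼ}` is the kernel of `mapDomain` along
the quotient map by the congruence `Γ` generated by the pairs `(bⱼ, cⱼ)`. So both ideals are
described by congruences on `ℕᵐ` that do not involve the field, and over a nontrivial ring the
kernel of `mapDomain φ` recovers the congruence `φ u = φ v`. The hypothesis over `k` therefore says
that `σ u = σ v ↔ Γ u v`, which gives the conclusion over `k'`.
-/

open AddMonoidAlgebra

namespace AddMonoidAlgebra

variable {R M N : Type*}

section Semiring

variable [CommSemiring R] [AddCommMonoid M]

theorem aeval_single_one_eq_mapDomainRingHom {ι : Type*} (s : ι → M) :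
    (MvPolynomial.aeval fun i => single (s i) (1 : R) : MvPolynomial ι R →ₐ[R] R[M]).toRingHom =
      mapDomainRingHom R (Finsupp.linearCombination ℕ s).toAddMonoidHom := by
  apply MvPolynomial.ringHom_ext
  · intro r
    rw [AlgHom.toRingHom_eq_coe, RingHom.coe_coe, MvPolynomial.aeval_C, MvPolynomial.C_apply,
      ← MvPolynomial.single_eq_monomial, mapDomainRingHom_apply, mapDomain_single]
    simp
  · intro i
    rw [AlgHom.toRingHom_eq_coe, RingHom.coe_coe, MvPolynomial.aeval_X, MvPolynomial.X,
      ← MvPolynomial.single_eq_monomial, mapDomainRingHom_apply, mapDomain_single]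
    simp

end Semiring

variable [CommRing R] [AddCommMonoid M] [AddCommMonoid N]

theorem mapDomainRingHom_single_sub_single (φ : M →+ N) (u v : M) (r : R) :
    mapDomainRingHom R φ (single u r - single v r) = single (φ u) r - single (φ v) r := by
  rw [map_sub, mapDomainRingHom_apply, mapDomainRingHom_apply, mapDomain_single, mapDomain_single]

theorem single_one_sub_single_one_mem_ker_mapDomainRingHom_iff [Nontrivial R] (φ : M →+ N)
    {u v : M} :
    single u (1 : R) - single v 1 ∈ RingHom.ker (mapDomainRingHom R φ) ↔ φ u = φ v := by
  rw [RingHom.mem_ker, mapDomainRingHom_single_sub_single, sub_eq_zero,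
    single_left_inj one_ne_zero]

theorem ker_mapDomainRingHom (φ : M →+ N) :
    RingHom.ker (mapDomainRingHom R φ) =
      Ideal.span {x | ∃ u v, φ u = φ v ∧ x = single u (1 : R) - single v 1} := by
  set I := Ideal.span {x | ∃ u v, φ u = φ v ∧ x = single u (1 : R) - single v 1}
  refine le_antisymm (fun f hf => ?_) (Ideal.span_le.2 ?_)
  · -- `ρ` picks a representative in each fibre of `φ`: `f - mapDomain ρ f` is a combination of
    -- binomials, and `mapDomain ρ f` factors through `mapDomain φ f = 0`.
    set ρ : M → M := Function.invFun φ ∘ φ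
    have hρ (a : M) : φ (ρ a) = φ a := Function.invFun_eq ⟨a, rfl⟩
    have hρf : mapDomain ρ f = 0 := by
      rw [RingHom.mem_ker, mapDomainRingHom_apply] at hf
      have : mapDomain ρ f = mapDomain (Function.invFun φ) (mapDomain φ f) := by
        ext; simp [ρ, Finsupp.mapDomain_comp]
      rw [this, hf, mapDomain_zero]
    have hsub (g : R[M]) : g - mapDomain ρ g ∈ I := by
      induction g using induction_linear with
      | zero => simp
      | add g g' hg hg' => simpa [mapDomain_add, add_sub_add_comm] using I.add_mem hg hg'
      | single a r =>
        have : single a r - single (ρ a) r = r • (single a 1 - single (ρ a) 1) := by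
          simp [smul_sub]
        rw [mapDomain_single, this]
        exact I.smul_of_tower_mem r (Ideal.subset_span ⟨a, ρ a, (hρ a).symm, rfl⟩)
    simpa [hρf] using hsub f
  · rintro x ⟨u, v, huv, rfl⟩
    rw [SetLike.mem_coe, RingHom.mem_ker, mapDomainRingHom_single_sub_single, huv, sub_self]

theorem ker_mapDomainRingHom_eq_iff [Nontrivial R] {P : Type*} [AddCommMonoid P] (φ : M →+ N)
    (ψ : M →+ P) :
    RingHom.ker (mapDomainRingHom R φ) = RingHom.ker (mapDomainRingHom R ψ) ↔
      ∀ u v, φ u = φ v ↔ ψ u = ψ v := by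
  refine ⟨fun h u v => ?_, fun h => by simp only [ker_mapDomainRingHom, h]⟩
  rw [← single_one_sub_single_one_mem_ker_mapDomainRingHom_iff (R := R), h,
    single_one_sub_single_one_mem_ker_mapDomainRingHom_iff]

def binomialAddCon (I : Ideal R[M]) : AddCon M where
  r u v := single u (1 : R) - single v 1 ∈ I
  iseqv :=
    { refl := fun u => by simp
      symm := fun h => by simpa using I.neg_mem h
      trans := fun h₁ h₂ => by simpa using I.add_mem h₁ h₂ }
  add' {w x y z} h₁ h₂ := by
    have key : single (w + y) (1 : R) - single (x + z) 1 =
        single y 1 * (single w 1 - single x 1) + single x 1 * (single y 1 - single z 1) := by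
      simp only [mul_sub, single_mul_single, mul_one]
      rw [add_comm y w, add_comm x y]
      abel
    rw [key]
    exact I.add_mem (I.mul_mem_left _ h₁) (I.mul_mem_left _ h₂)

theorem ker_mapDomainRingHom_addConGen {ι : Type*} (b c : ι → M) :
    RingHom.ker (mapDomainRingHom R (addConGen fun u v => ∃ j, u = b j ∧ v = c j).mk') =
      Ideal.span {x | ∃ j, x = single (b j) (1 : R) - single (c j) 1} := by
  set I := Ideal.span {x | ∃ j, x = single (b j) (1 : R) - single (c j) 1}
  rw [ker_mapDomainRingHom]
  refine le_antisymm (Ideal.span_le.2 ?_) (Ideal.span_le.2 ?_)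
  · rintro x ⟨u, v, huv, rfl⟩
    have hle : addConGen (fun u v => ∃ j, u = b j ∧ v = c j) ≤ binomialAddCon I :=
      AddCon.addConGen_le.2 fun _ _ ⟨j, hu, hv⟩ => Ideal.subset_span ⟨j, by rw [hu, hv]⟩
    exact hle ((AddCon.eq _).1 huv)
  · rintro x ⟨j, rfl⟩
    exact Ideal.subset_span ⟨b j, c j, (AddCon.eq _).2 (AddConGen.Rel.of _ _ ⟨j, rfl, rfl⟩), rfl⟩

end AddMonoidAlgebra

/-- If over some field `k` the toric ideal of `S = {s₁,…,sₘ} ⊆ ℤⁿ` (the kernel of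
`k[y₁,…,yₘ] → k[ℤⁿ]`, `yᵢ ↦ x^{sᵢ}`) is generated by the binomials
`y^{bⱼ} − y^{cⱼ}`, then over any other field `k'` the same binomials generate the
corresponding toric ideal. -/
theorem stmt_6 (k k' : Type) [Field k] [Field k'] (n m l : ℕ)
    (s : Fin m → (Fin n → ℤ)) (b c : Fin l → (Fin m →₀ ℕ))
    (h : RingHom.ker (MvPolynomial.aeval
          (fun i : Fin m => AddMonoidAlgebra.single (s i) (1 : k)) :
          MvPolynomial (Fin m) k →ₐ[k] AddMonoidAlgebra k (Fin n → ℤ)) =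
        Ideal.span {f : MvPolynomial (Fin m) k | ∃ j : Fin l,
          f = MvPolynomial.monomial (b j) (1 : k) - MvPolynomial.monomial (c j) (1 : k)}) :
    RingHom.ker (MvPolynomial.aeval
          (fun i : Fin m => AddMonoidAlgebra.single (s i) (1 : k')) :
          MvPolynomial (Fin m) k' →ₐ[k'] AddMonoidAlgebra k' (Fin n → ℤ)) =
        Ideal.span {f : MvPolynomial (Fin m) k' | ∃ j : Fin l,
          f = MvPolynomial.monomial (b j) (1 : k') - MvPolynomial.monomial (c j) (1 : k')} := by
  have toric_ker (K : Type) [Field K] :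
      RingHom.ker (MvPolynomial.aeval fun i => single (s i) (1 : K) :
        MvPolynomial (Fin m) K →ₐ[K] AddMonoidAlgebra K (Fin n → ℤ)) =
        RingHom.ker (mapDomainRingHom K (Finsupp.linearCombination ℕ s).toAddMonoidHom) := by
    rw [← aeval_single_one_eq_mapDomainRingHom]
    rfl
  have binomial_span (K : Type) [Field K] :
      Ideal.span {f : MvPolynomial (Fin m) K | ∃ j,
        f = MvPolynomial.monomial (b j) (1 : K) - MvPolynomial.monomial (c j) (1 : K)} =
        RingHom.ker (mapDomainRingHom K (addConGen fun u v => ∃ j, u = b j ∧ v = c j).mk') := by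
    rw [ker_mapDomainRingHom_addConGen]
    rfl
  rw [toric_ker, binomial_span] at h ⊢
  exact (ker_mapDomainRingHom_eq_iff _ _).2 ((ker_mapDomainRingHom_eq_iff _ _).1 h)
end

section
/- A rational polyhedral cone in Z^n (the set of lattice points in a cone generated over R_{≥0} by finitely many lattice vectors, intersected with Z^n) is finitely generated as a monoid (Gordan's Lemma). -/
/-!
Every lattice point `x = ∑ λᵢ vᵢ` of the cone splits as `∑ ⌊λᵢ⌋ vᵢ + r`, where
`r = ∑ (λᵢ - ⌊λᵢ⌋) vᵢ` is again a lattice point and lies in the fundamental parallelepiped;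
the vectors `vᵢ` lie there too. The parallelepiped is bounded, so it contains only finitely
many lattice points, and these generate the cone.
-/

open Finset

namespace Gordan

variable {ι σ : Type*} [Fintype ι]

def latticeCone (v : ι → σ → ℤ) : AddSubmonoid (σ → ℤ) where
  carrier := {x | ∃ l : ι → ℝ, (∀ i, 0 ≤ l i) ∧
    (fun j => (x j : ℝ)) = ∑ i, l i • fun j => (v i j : ℝ)}
  zero_mem' := ⟨0, fun _ => le_rfl, by ext; simp⟩
  add_mem' := by
    rintro x y ⟨l, hl, hx⟩ ⟨l', hl', hy⟩
    refine ⟨l + l', fun i => add_nonneg (hl i) (hl' i), ?_⟩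
    simp only [Pi.add_apply, Int.cast_add, add_smul, sum_add_distrib, ← hx, ← hy]
    rfl

def parallelepipedLatticePoints (v : ι → σ → ℤ) : Set (σ → ℤ) :=
  {x | ∃ l : ι → ℝ, (∀ i, 0 ≤ l i ∧ l i ≤ 1) ∧
    (fun j => (x j : ℝ)) = ∑ i, l i • fun j => (v i j : ℝ)}

variable (v : ι → σ → ℤ)

theorem parallelepipedLatticePoints_subset_latticeCone :
    parallelepipedLatticePoints v ⊆ latticeCone v := by
  rintro x ⟨l, hl, hx⟩
  exact ⟨l, fun i => (hl i).1, hx⟩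

theorem parallelepipedLatticePoints_finite [Finite σ] :
    (parallelepipedLatticePoints v).Finite := by
  let B : σ → ℤ := fun j => ∑ i, |v i j|
  refine (Set.Finite.pi fun j => Set.finite_Icc (-B j) (B j)).subset ?_
  rintro x ⟨l, hl, hx⟩ j -
  refine abs_le.mp ?_
  have hxj : (x j : ℝ) = ∑ i, l i * v i j := by simpa using congrFun hx j
  have : |(x j : ℝ)| ≤ B j := calc
    |(x j : ℝ)| ≤ ∑ i, |l i * v i j| := hxj ▸ abs_sum_le_sum_abs _ _
    _ ≤ ∑ i, |(v i j : ℝ)| := sum_le_sum fun i _ => by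
      rw [abs_mul, abs_of_nonneg (hl i).1]
      exact mul_le_of_le_one_left (abs_nonneg _) (hl i).2
    _ = B j := by simp [B]
  exact_mod_cast this

theorem mem_parallelepipedLatticePoints [DecidableEq ι] (i : ι) :
    v i ∈ parallelepipedLatticePoints v := by
  refine ⟨Pi.single i 1, fun i' => ?_, ?_⟩
  · rcases eq_or_ne i' i with rfl | h <;> simp [*]
  · simp [Pi.single_apply]

theorem exists_eq_sum_nsmul_add_mem_parallelepipedLatticePoints {x : σ → ℤ}
    (hx : x ∈ latticeCone v) :
    ∃ m : ι → ℕ, ∃ r ∈ parallelepipedLatticePoints v, x = ∑ i, m i • v i + r := by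
  obtain ⟨l, hl, hx⟩ := hx
  refine ⟨fun i => ⌊l i⌋₊, x - ∑ i, ⌊l i⌋₊ • v i, ⟨fun i => l i - ⌊l i⌋₊, fun i => ?_, ?_⟩,
    by abel⟩
  · exact ⟨sub_nonneg.mpr (Nat.floor_le (hl i)),
      by linarith [Nat.lt_floor_add_one (l i)]⟩
  · ext j
    have hxj : (x j : ℝ) = ∑ i, l i * v i j := by simpa using congrFun hx j
    simp [hxj, sub_mul, sum_sub_distrib]

theorem latticeCone_eq_closure_parallelepipedLatticePoints :
    latticeCone v = AddSubmonoid.closure (parallelepipedLatticePoints v) := by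
  classical
  refine le_antisymm (fun x hx => ?_)
    (AddSubmonoid.closure_le.mpr (parallelepipedLatticePoints_subset_latticeCone v))
  obtain ⟨m, r, hr, rfl⟩ := exists_eq_sum_nsmul_add_mem_parallelepipedLatticePoints v hx
  refine add_mem (sum_mem fun i _ => nsmul_mem ?_ _) (AddSubmonoid.subset_closure hr)
  exact AddSubmonoid.subset_closure (mem_parallelepipedLatticePoints v i)

end Gordan

open Gordan in
/-- Gordan's Lemma: the set of lattice points of a rational polyhedral cone
(generated over `ℝ≥0` by lattice vectors `v₁,…,v_k`) is a finitely generated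
monoid; moreover generators can be taken among the lattice points of the
fundamental parallelepiped `{∑ λᵢ vᵢ : 0 ≤ λᵢ ≤ 1}`. -/
theorem stmt_8 (n k : ℕ) (v : Fin k → (Fin n → ℤ)) :
    ∃ S : Finset (Fin n → ℤ),
      (∀ s ∈ S, ∃ l : Fin k → ℝ, (∀ i, 0 ≤ l i ∧ l i ≤ 1) ∧
        (fun j => (s j : ℝ)) = ∑ i, l i • (fun j => ((v i j : ℝ)))) ∧
      (AddSubmonoid.closure (S : Set (Fin n → ℤ)) : Set (Fin n → ℤ)) =
        {x : Fin n → ℤ | ∃ l : Fin k → ℝ, (∀ i, 0 ≤ l i) ∧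
          (fun j => (x j : ℝ)) = ∑ i, l i • (fun j => ((v i j : ℝ)))} := by
  have hfin := parallelepipedLatticePoints_finite v
  refine ⟨hfin.toFinset, fun s hs => hfin.mem_toFinset.mp hs, ?_⟩
  rw [hfin.coe_toFinset, ← latticeCone_eq_closure_parallelepipedLatticePoints]
  rfl
end

section
/- Let G = (V, E) be a graph and let p = (3, 2, 2, ..., 2) ∈ Z^{|E|+1} (first coordinate 3, all edge coordinates 2). If p can be written as p_1 + p_2 + p_3 where each p_i = (1, χ_{Cut(A_i|B_i)}) is a vertex of the cut polytope of G (the indicator vector of the cut of a partition A_i|B_i of V, prepended by 1), then G admits a proper 4-coloring. -/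
/-- If `p = (3,2,…,2)` is a sum of three cut-polytope vertices of a graph `G`,
i.e. there are three partitions `Aᵢ | Aᵢᶜ` of the vertex set such that every
edge lies in exactly two of the three cuts, then `G` admits a proper
4-coloring. -/
theorem stmt_13 (V : Type) [Fintype V] (G : SimpleGraph V) (A : Fin 3 → Set V)
    (h : ∀ u v : V, G.Adj u v → ∃ i j : Fin 3, i ≠ j ∧
      ¬((u ∈ A i) ↔ (v ∈ A i)) ∧ ¬((u ∈ A j) ↔ (v ∈ A j)) ∧
      ∀ k : Fin 3, ¬((u ∈ A k) ↔ (v ∈ A k)) → k = i ∨ k = j) :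
    ∃ c : V → Fin 4, ∀ u v : V, G.Adj u v → c u ≠ c v := by
  classical
  refine ⟨fun v => (if v ∈ A 0 then 0 else 2) + (if v ∈ A 1 then 0 else 1), ?_⟩
  intro u v huv hc
  obtain ⟨i, j, hij, hi, hj, hk⟩ := h u v huv
  have h0 : (u ∈ A 0 ↔ v ∈ A 0) ∧ (u ∈ A 1 ↔ v ∈ A 1) := by
    simp only at hc
    split_ifs at hc <;> simp_all
  have hi2 : i = 2 := by
    fin_cases i <;> simp_all
  have hj2 : j = 2 := by
    fin_cases j <;> simp_all
  exact hij (hi2.trans hj2.symm)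
end

section
/- Let P be a lattice polytope spanning a lattice M. Then the following are equivalent: (1) P is very ample (for all sufficiently large k, every lattice point of kP is a sum of k lattice points of P); (2) for every lattice point m ∈ P, the monoid generated by {p − m : p ∈ P ∩ M} is saturated in M; (3) for every vertex m of P, the monoid generated by {p − m : p ∈ P ∩ M} is saturated in M. -/
/-!
The monoid `S_v` generated by `P ∩ M - v` consists of the `y` with `y + ℓ v` a sum of `ℓ` lattice
points of `P` for some `ℓ`. If `P` is very ample and `k x ∈ S_v`, then `x + t v ∈ tP` for large `t`,
so `x + t v` is a sum of `t` lattice points and `x ∈ S_v`. Conversely, write a lattice point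
`m ∈ kP` as `∑ μ_q q` over the vertices; some vertex `v` has `μ_v ≥ k / #vertices`. Removing
`⌊μ_q⌋` copies of every other vertex leaves a lattice point of the cone at `v` lying in a fixed
bounded zonotope. Saturation puts it in `S_v`, and as there are finitely many such points they
all are sums of `L` lattice points shifted by `-L v` for one `L`, which fits once `μ_v ≥ L`.
-/

open Pointwise
/-- The canonical embedding `ℤⁿ → ℝⁿ`. -/
def coeR (n : ℕ) (m : Fin n → ℤ) : Fin n → ℝ := fun i => (m i : ℝ)

/-- The lattice polytope spanned by a finite set of lattice points. -/
def polyHull (n : ℕ) (Pset : Finset (Fin n → ℤ)) : Set (Fin n → ℝ) :=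
  convexHull ℝ (coeR n '' ↑Pset)

/-- The lattice points of the polytope. -/
def latticePts (n : ℕ) (Pset : Finset (Fin n → ℤ)) : Set (Fin n → ℤ) :=
  {m : Fin n → ℤ | coeR n m ∈ polyHull n Pset}

/-- A submonoid `S` of `ℤⁿ` is saturated if `k • x ∈ S` with `k > 0` implies
`x ∈ S`. -/
def SaturatedIn (n : ℕ) (S : AddSubmonoid (Fin n → ℤ)) : Prop :=
  ∀ (x : Fin n → ℤ) (k : ℤ), 0 < k → k • x ∈ S → x ∈ S

/-- The monoid generated by the differences `p − m`, `p` a lattice point of the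
polytope. -/
def shiftMonoid (n : ℕ) (Pset : Finset (Fin n → ℤ)) (m : Fin n → ℤ) :
    AddSubmonoid (Fin n → ℤ) :=
  AddSubmonoid.closure {y : Fin n → ℤ | ∃ p ∈ latticePts n Pset, y = p - m}

/-- The polytope is very ample: for all large `k`, every lattice point of `kP`
is a sum of `k` lattice points of `P`. -/
def VeryAmplePoly (n : ℕ) (Pset : Finset (Fin n → ℤ)) : Prop :=
  ∃ N : ℕ, ∀ k : ℕ, N ≤ k → ∀ m : Fin n → ℤ,
    coeR n m ∈ (k : ℝ) • polyHull n Pset →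
    ∃ f : Fin k → (Fin n → ℤ), (∀ i, f i ∈ latticePts n Pset) ∧ m = ∑ i, f i

open Filter

section

variable {n : ℕ}

lemma coeR_injective : Function.Injective (coeR n) := fun _ _ h =>
  funext fun i => Int.cast_injective (congrFun h i)

@[simp] lemma coeR_zero : coeR n 0 = 0 := by funext i; simp [coeR]

@[simp] lemma coeR_add (a b : Fin n → ℤ) : coeR n (a + b) = coeR n a + coeR n b := by
  funext i; simp [coeR]

@[simp] lemma coeR_sub (a b : Fin n → ℤ) : coeR n (a - b) = coeR n a - coeR n b := by
  funext i; simp [coeR]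

@[simp] lemma coeR_nsmul (k : ℕ) (a : Fin n → ℤ) : coeR n (k • a) = (k : ℝ) • coeR n a := by
  funext i; simp [coeR]

@[simp] lemma coeR_sum {ι : Type*} (F : Finset ι) (g : ι → Fin n → ℤ) :
    coeR n (∑ i ∈ F, g i) = ∑ i ∈ F, coeR n (g i) := by
  funext j; simp [coeR, Finset.sum_apply]

lemma Set.mem_nsmul_iff_exists_fin {M : Type*} [AddCommMonoid M] {A : Set M} {k : ℕ} {m : M} :
    m ∈ k • A ↔ ∃ f : Fin k → M, (∀ i, f i ∈ A) ∧ m = ∑ i, f i := by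
  rw [Set.mem_nsmul]
  constructor
  · rintro ⟨f, rfl⟩
    exact ⟨fun i => f i, fun i => (f i).2, List.sum_ofFn⟩
  · rintro ⟨f, hf, rfl⟩
    exact ⟨fun i => ⟨f i, hf i⟩, List.sum_ofFn⟩

lemma add_nsmul_mem_nsmul_of_mem_closure {G : Type*} [AddCommGroup G] {A : Set G} {v y : G}
    (hy : y ∈ AddSubmonoid.closure {x | ∃ p ∈ A, x = p - v}) :
    ∃ ℓ : ℕ, y + ℓ • v ∈ ℓ • A := by
  induction hy using AddSubmonoid.closure_induction with
  | mem x hx =>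
    obtain ⟨p, hp, rfl⟩ := hx
    exact ⟨1, by simpa using hp⟩
  | zero => exact ⟨0, by simp⟩
  | add x y _ _ hx hy =>
    obtain ⟨ℓ₁, h₁⟩ := hx
    obtain ⟨ℓ₂, h₂⟩ := hy
    refine ⟨ℓ₁ + ℓ₂, ?_⟩
    rw [add_nsmul, add_nsmul]
    convert Set.add_mem_add h₁ h₂ using 1
    abel

lemma mem_closure_of_add_nsmul_mem_nsmul {G : Type*} [AddCommGroup G] {A : Set G} {v : G}
    {ℓ : ℕ} {y : G} (hy : y + ℓ • v ∈ ℓ • A) :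
    y ∈ AddSubmonoid.closure {x | ∃ p ∈ A, x = p - v} := by
  induction ℓ generalizing y with
  | zero =>
    rw [show y = 0 by simpa using hy]
    exact zero_mem _
  | succ ℓ ih =>
    rw [succ_nsmul, succ_nsmul] at hy
    obtain ⟨b, hb, a, ha, hab⟩ := hy
    obtain rfl : y = b + a - (ℓ • v + v) := eq_sub_of_add_eq hab.symm
    convert add_mem (ih (y := b - ℓ • v) (by simpa using hb))
      (AddSubmonoid.subset_closure ⟨a, ha, rfl⟩) using 1
    abel

lemma eventually_add_nsmul_mem_nsmul {G : Type*} [AddCommGroup G] {A : Set G} {v y : G}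
    (hv : v ∈ A) {ℓ : ℕ} (hy : y + ℓ • v ∈ ℓ • A) :
    ∀ᶠ j : ℕ in atTop, y + j • v ∈ j • A := by
  filter_upwards [eventually_ge_atTop ℓ] with j hj
  obtain ⟨d, rfl⟩ := Nat.exists_eq_add_of_le hj
  rw [add_nsmul, add_nsmul, ← add_assoc]
  exact Set.add_mem_add hy (Set.nsmul_mem_nsmul (n := d) hv)

lemma veryAmplePoly_iff (P : Finset (Fin n → ℤ)) :
    VeryAmplePoly n P ↔ ∀ᶠ k : ℕ in atTop,
      ∀ m, coeR n m ∈ (k : ℝ) • polyHull n P → m ∈ k • latticePts n P := by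
  simp only [VeryAmplePoly, eventually_atTop, Set.mem_nsmul_iff_exists_fin]

lemma convex_polyHull (P : Finset (Fin n → ℤ)) : Convex ℝ (polyHull n P) :=
  convex_convexHull ℝ _

lemma coeR_mem_smul_polyHull_of_mem_nsmul {P : Finset (Fin n → ℤ)}
    (hP : (polyHull n P).Nonempty) {ℓ : ℕ} {m : Fin n → ℤ} (hm : m ∈ ℓ • latticePts n P) :
    coeR n m ∈ (ℓ : ℝ) • polyHull n P := by
  induction ℓ generalizing m with
  | zero =>
    rw [show m = 0 by simpa using hm]
    simp [Set.zero_smul_set hP]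
  | succ ℓ ih =>
    rw [succ_nsmul] at hm
    obtain ⟨b, hb, a, ha, rfl⟩ := hm
    rw [Nat.cast_succ, (convex_polyHull P).add_smul (Nat.cast_nonneg ℓ) zero_le_one, one_smul]
    simp only [coeR_add]
    exact Set.add_mem_add (ih hb) ha

theorem saturatedIn_shiftMonoid_of_veryAmplePoly {P : Finset (Fin n → ℤ)}
    (hP : VeryAmplePoly n P) {m : Fin n → ℤ} (hm : m ∈ latticePts n P) :
    SaturatedIn n (shiftMonoid n P m) := by
  intro x k hk hkx
  lift k to ℕ using hk.le
  rw [natCast_zsmul] at hkx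
  obtain ⟨ℓ, hℓ⟩ := add_nsmul_mem_nsmul_of_mem_closure hkx
  obtain ⟨t, ht, hℓt⟩ := (((veryAmplePoly_iff P).1 hP).and (eventually_ge_atTop ℓ)).exists
  refine mem_closure_of_add_nsmul_mem_nsmul (ht _ ?_)
  have hℓkt : ℓ ≤ k * t := hℓt.trans (Nat.le_mul_of_pos_left t (by exact_mod_cast hk))
  obtain ⟨d, hd⟩ := Nat.exists_eq_add_of_le hℓkt
  have hd' : (k : ℝ) * t = ℓ + d := by exact_mod_cast hd
  -- `k (x + t m) = (k x + ℓ m) + d m` lies in `ℓ P + d P = k t P`.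
  have hsum : coeR n (k • x + ℓ • m) + coeR n (d • m) ∈ ((ℓ : ℝ) + d) • polyHull n P := by
    rw [(convex_polyHull P).add_smul (Nat.cast_nonneg _) (Nat.cast_nonneg _), coeR_nsmul]
    exact Set.add_mem_add (coeR_mem_smul_polyHull_of_mem_nsmul ⟨_, hm⟩ hℓ)
      (Set.smul_mem_smul_set hm)
  rw [← Set.smul_mem_smul_set_iff₀ (show (k : ℝ) ≠ 0 by exact_mod_cast hk.ne'), smul_smul, hd']
  convert hsum using 1
  simp only [coeR_add, coeR_nsmul, smul_add, smul_smul, hd', add_smul]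
  abel

def zonotopePts {ι : Type*} (F : Finset ι) (g : ι → Fin n → ℤ) : Set (Fin n → ℤ) :=
  {r | ∃ c : ι → ℝ, (∀ i ∈ F, c i ∈ Set.Icc 0 1) ∧ coeR n r = ∑ i ∈ F, c i • coeR n (g i)}

lemma finite_zonotopePts {ι : Type*} (F : Finset ι) (g : ι → Fin n → ℤ) :
    (zonotopePts F g).Finite := by
  refine (Set.finite_Icc (fun j => -∑ i ∈ F, |g i j|) (fun j => ∑ i ∈ F, |g i j|)).subset ?_
  rintro r ⟨c, hc, hr⟩
  have hbound : ∀ j, |r j| ≤ ∑ i ∈ F, |g i j| := by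
    intro j
    have hj : (r j : ℝ) = ∑ i ∈ F, c i * g i j := by
      simpa [coeR, Finset.sum_apply] using congrFun hr j
    have : |(r j : ℝ)| ≤ ∑ i ∈ F, |(g i j : ℝ)| := by
      rw [hj]
      refine (Finset.abs_sum_le_sum_abs _ _).trans (Finset.sum_le_sum fun i hi => ?_)
      obtain ⟨hc₀, hc₁⟩ := hc i hi
      rw [abs_mul, abs_of_nonneg hc₀]
      exact mul_le_of_le_one_left (abs_nonneg _) hc₁
    exact_mod_cast this
  exact ⟨fun j => (abs_le.1 (hbound j)).1, fun j => (abs_le.1 (hbound j)).2⟩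

theorem SaturatedIn.mem_of_coeR_eq_sum_smul {S : AddSubmonoid (Fin n → ℤ)}
    (hS : SaturatedIn n S) {ι : Type*} {F : Finset ι} {g : ι → Fin n → ℤ}
    (hg : ∀ i ∈ F, g i ∈ S) {θ : ι → ℝ} (hθ : ∀ i ∈ F, 0 ≤ θ i) {y : Fin n → ℤ}
    (hy : coeR n y = ∑ i ∈ F, θ i • coeR n (g i)) : y ∈ S := by
  set a : ℕ → ι → ℕ := fun t i => ⌊(t : ℝ) * θ i⌋₊
  set r : ℕ → Fin n → ℤ := fun t => t • y - ∑ i ∈ F, a t i • g i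
  -- The remainders `r t` lie in a finite zonotope, so two of them coincide.
  have hr : ∀ t, r t ∈ zonotopePts F g := by
    intro t
    refine ⟨fun i => t * θ i - a t i, fun i hi => ⟨?_, ?_⟩, ?_⟩
    · exact sub_nonneg.2 (Nat.floor_le (mul_nonneg (Nat.cast_nonneg t) (hθ i hi)))
    · linarith [Nat.lt_floor_add_one ((t : ℝ) * θ i)]
    · simp only [r, coeR_sub, coeR_nsmul, coeR_sum, hy, Finset.smul_sum, smul_smul, sub_smul,
        Finset.sum_sub_distrib]
  have hrepeat : ∀ t₁ t₂, t₁ < t₂ → r t₁ = r t₂ → y ∈ S := by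
    intro t₁ t₂ hlt heq
    obtain ⟨d, rfl⟩ := Nat.exists_eq_add_of_le hlt.le
    have hmono : ∀ i ∈ F, a t₁ i ≤ a (t₁ + d) i := fun i hi =>
      Nat.floor_le_floor (mul_le_mul_of_nonneg_right (by norm_cast; omega) (hθ i hi))
    have hsplit : ∑ i ∈ F, a (t₁ + d) i • g i =
        ∑ i ∈ F, a t₁ i • g i + ∑ i ∈ F, (a (t₁ + d) i - a t₁ i) • g i := by
      rw [← Finset.sum_add_distrib]
      exact Finset.sum_congr rfl fun i hi => by rw [← add_nsmul, Nat.add_sub_cancel' (hmono i hi)]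
    have hdy : d • y = ∑ i ∈ F, (a (t₁ + d) i - a t₁ i) • g i := by
      simp only [r] at heq
      rw [hsplit, add_nsmul] at heq
      linear_combination (norm := abel) -heq
    refine hS y d (by omega) ?_
    rw [natCast_zsmul, hdy]
    exact sum_mem fun i hi => nsmul_mem (hg i hi) _
  obtain ⟨t₁, -, t₂, -, hne, heq⟩ :=
    Set.infinite_univ.exists_ne_map_eq_of_mapsTo (fun t _ => hr t) (finite_zonotopePts F g)
  rcases hne.lt_or_gt with hlt | hlt
  exacts [hrepeat t₁ t₂ hlt heq, hrepeat t₂ t₁ hlt heq.symm]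

lemma mem_latticePts_of_mem {P : Finset (Fin n → ℤ)} {q : Fin n → ℤ} (hq : q ∈ P) :
    q ∈ latticePts n P :=
  subset_convexHull ℝ _ ⟨q, hq, rfl⟩

open Classical in
noncomputable def vertices (P : Finset (Fin n → ℤ)) : Finset (Fin n → ℤ) :=
  P.filter fun q => coeR n q ∈ (polyHull n P).extremePoints ℝ

lemma mem_vertices {P : Finset (Fin n → ℤ)} {v : Fin n → ℤ} :
    v ∈ vertices P ↔ v ∈ P ∧ coeR n v ∈ (polyHull n P).extremePoints ℝ := by
  classical
  exact Finset.mem_filter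

lemma convexHull_vertices (P : Finset (Fin n → ℤ)) :
    convexHull ℝ (coeR n '' vertices P) = polyHull n P := by
  have hext : (polyHull n P).extremePoints ℝ = coeR n '' vertices P := by
    ext x
    constructor
    · intro hx
      obtain ⟨q, hq, rfl⟩ := extremePoints_convexHull_subset hx
      exact ⟨q, mem_vertices.2 ⟨hq, hx⟩, rfl⟩
    · rintro ⟨q, hq, rfl⟩
      exact (mem_vertices.1 hq).2
  have hKM : closure (convexHull ℝ ((polyHull n P).extremePoints ℝ)) = polyHull n P :=
    closure_convexHull_extremePoints
    ((P.finite_toSet.image (coeR n)).isCompact_convexHull ℝ) (convex_polyHull P)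
  rwa [hext, (((vertices P).finite_toSet.image _).isCompact_convexHull ℝ).isClosed.closure_eq]
    at hKM

lemma exists_weights_of_coeR_mem_smul_polyHull {P : Finset (Fin n → ℤ)} {k : ℕ}
    {m : Fin n → ℤ} (hm : coeR n m ∈ (k : ℝ) • polyHull n P) :
    ∃ μ : (Fin n → ℤ) → ℝ, (∀ q ∈ vertices P, 0 ≤ μ q) ∧ ∑ q ∈ vertices P, μ q = k ∧
      coeR n m = ∑ q ∈ vertices P, μ q • coeR n q := by
  obtain ⟨x, hx, hxm⟩ := Set.mem_smul_set.1 hm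
  rw [← convexHull_vertices, ← Finset.coe_image, Finset.mem_convexHull'] at hx
  obtain ⟨w, hw₀, hw₁, rfl⟩ := hx
  have hinj : Set.InjOn (coeR n) (vertices P) := coeR_injective.injOn
  refine ⟨fun q => k * w (coeR n q),
    fun q hq => mul_nonneg (Nat.cast_nonneg k) (hw₀ _ (Finset.mem_image_of_mem _ hq)), ?_, ?_⟩
  · rw [← Finset.mul_sum, ← Finset.sum_image hinj, hw₁, mul_one]
  · rw [← hxm, Finset.sum_image hinj, Finset.smul_sum]
    simp_rw [smul_smul]

lemma mem_nsmul_latticePts_of_weights {P V : Finset (Fin n → ℤ)}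
    (hV : ∀ q ∈ V, q ∈ latticePts n P) {v : Fin n → ℤ} (hv : v ∈ V)
    (hsat : SaturatedIn n (shiftMonoid n P v)) {L : ℕ}
    (hL : ∀ r ∈ zonotopePts (V.erase v) (· - v) ∩ shiftMonoid n P v,
      r + L • v ∈ L • latticePts n P)
    {k : ℕ} {m : Fin n → ℤ} {μ : (Fin n → ℤ) → ℝ} (hμ₀ : ∀ q ∈ V, 0 ≤ μ q)
    (hμk : ∑ q ∈ V, μ q = k) (hm : coeR n m = ∑ q ∈ V, μ q • coeR n q) (hLv : L ≤ μ v) :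
    m ∈ k • latticePts n P := by
  set a : (Fin n → ℤ) → ℕ := fun q => ⌊μ q⌋₊
  set T := ∑ q ∈ V.erase v, a q
  set r := m - k • v - ∑ q ∈ V.erase v, a q • (q - v)
  have hμ₀' : ∀ q ∈ V.erase v, 0 ≤ μ q := fun q hq => hμ₀ q (Finset.mem_of_mem_erase hq)
  have hr : coeR n r = ∑ q ∈ V.erase v, (μ q - a q) • coeR n (q - v) := by
    have hmv : coeR n m - (k : ℝ) • coeR n v = ∑ q ∈ V.erase v, μ q • coeR n (q - v) := by
      rw [Finset.sum_erase _ (by simp), hm, ← hμk, Finset.sum_smul, ← Finset.sum_sub_distrib]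
      simp only [coeR_sub, smul_sub]
    simp only [r, coeR_sub, coeR_nsmul, coeR_sum, hmv, sub_smul, Finset.sum_sub_distrib]
  have hrS : r ∈ shiftMonoid n P v :=
    hsat.mem_of_coeR_eq_sum_smul
      (fun q hq => AddSubmonoid.subset_closure ⟨q, hV q (Finset.mem_of_mem_erase hq), rfl⟩)
      (fun q hq => sub_nonneg.2 (Nat.floor_le (hμ₀' q hq))) hr
  have hrZ : r ∈ zonotopePts (V.erase v) (· - v) := by
    refine ⟨_, fun q hq => ⟨sub_nonneg.2 (Nat.floor_le (hμ₀' q hq)), ?_⟩, hr⟩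
    linarith [Nat.lt_floor_add_one (μ q)]
  have hTL : T + L ≤ k := by
    have hT : (T : ℝ) ≤ k - μ v := by
      rw [← hμk, ← Finset.sum_erase_add _ _ hv, add_sub_cancel_right]
      simp only [T, Nat.cast_sum]
      exact Finset.sum_le_sum fun q hq => Nat.floor_le (hμ₀' q hq)
    have : (T : ℝ) + L ≤ k := by linarith
    exact_mod_cast this
  obtain ⟨s, hs⟩ := Nat.exists_eq_add_of_le hTL
  have hdecomp : m = (r + L • v) + ∑ q ∈ V.erase v, a q • q + s • v := by
    simp only [r, hs, add_nsmul, smul_sub, Finset.sum_sub_distrib, Finset.sum_nsmul_assoc]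
    abel
  rw [hdecomp, hs, add_comm T L, add_nsmul, add_nsmul, ← Finset.sum_nsmul_assoc]
  refine Set.add_mem_add (Set.add_mem_add (hL r ⟨hrZ, hrS⟩) ?_) (Set.nsmul_mem_nsmul (hV v hv))
  exact Set.finsetSum_mem_finsetSum _ _ _ fun q hq =>
    Set.nsmul_mem_nsmul (hV q (Finset.mem_of_mem_erase hq))

theorem veryAmplePoly_of_saturatedIn_vertices {P : Finset (Fin n → ℤ)}
    (h : ∀ v ∈ vertices P, SaturatedIn n (shiftMonoid n P v)) : VeryAmplePoly n P := by
  have hV : ∀ q ∈ vertices P, q ∈ latticePts n P := fun q hq =>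
    mem_latticePts_of_mem (mem_vertices.1 hq).1
  have hL : ∀ᶠ L : ℕ in atTop, ∀ v ∈ vertices P,
      ∀ r ∈ zonotopePts ((vertices P).erase v) (· - v) ∩ shiftMonoid n P v,
        r + L • v ∈ L • latticePts n P := by
    refine (eventually_all_finset _).2 fun v hv =>
      (eventually_all_finite ((finite_zonotopePts _ _).inter_of_left _)).2 fun r hr => ?_
    obtain ⟨ℓ, hℓ⟩ := add_nsmul_mem_nsmul_of_mem_closure hr.2
    exact eventually_add_nsmul_mem_nsmul (hV v hv) hℓ
  obtain ⟨L, hL⟩ := hL.exists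
  rw [veryAmplePoly_iff]
  filter_upwards [eventually_ge_atTop (max 1 (L * (vertices P).card))] with k hk m hm
  obtain ⟨μ, hμ₀, hμk, hμm⟩ := exists_weights_of_coeR_mem_smul_polyHull hm
  obtain ⟨v, hv, hLv⟩ : ∃ v ∈ vertices P, (L : ℝ) ≤ μ v := by
    have hne : (vertices P).Nonempty := Finset.nonempty_of_sum_ne_zero (f := μ) <| by
      rw [hμk]
      exact_mod_cast Nat.one_le_iff_ne_zero.1 (le_of_max_le_left hk)
    refine Finset.exists_le_of_sum_le hne ?_
    rw [Finset.sum_const, nsmul_eq_mul, hμk, mul_comm]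
    exact_mod_cast le_of_max_le_right hk
  exact mem_nsmul_latticePts_of_weights hV hv (h v hv) (hL v hv) hμ₀ hμk hμm hLv

end

theorem stmt_18_general (n : ℕ) (Pset : Finset (Fin n → ℤ)) :
    (VeryAmplePoly n Pset ↔
      ∀ m ∈ latticePts n Pset, SaturatedIn n (shiftMonoid n Pset m)) ∧
    (VeryAmplePoly n Pset ↔
      ∀ m ∈ latticePts n Pset,
        coeR n m ∈ Set.extremePoints ℝ (polyHull n Pset) →
        SaturatedIn n (shiftMonoid n Pset m)) := by
  have hard : (∀ m ∈ latticePts n Pset, coeR n m ∈ Set.extremePoints ℝ (polyHull n Pset) →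
      SaturatedIn n (shiftMonoid n Pset m)) → VeryAmplePoly n Pset := fun h =>
    veryAmplePoly_of_saturatedIn_vertices fun v hv =>
      h v (mem_latticePts_of_mem (mem_vertices.1 hv).1) (mem_vertices.1 hv).2
  exact ⟨⟨fun h _ hm => saturatedIn_shiftMonoid_of_veryAmplePoly h hm,
      fun h => hard fun m hm _ => h m hm⟩,
    ⟨fun h _ hm _ => saturatedIn_shiftMonoid_of_veryAmplePoly h hm, hard⟩⟩

/-- For a lattice polytope spanning the lattice `ℤⁿ`, the following are
equivalent: (1) the polytope is very ample; (2) for every lattice point `m` of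
`P` the monoid generated by `P ∩ ℤⁿ − m` is saturated; (3) the same for every
vertex `m` of `P`. -/
theorem stmt_18 (n : ℕ) (Pset : Finset (Fin n → ℤ))
    (hspan : AddSubgroup.closure
      {x : Fin n → ℤ | ∃ p ∈ latticePts n Pset, ∃ q ∈ latticePts n Pset, x = p - q} = ⊤) :
    (VeryAmplePoly n Pset ↔
      ∀ m ∈ latticePts n Pset, SaturatedIn n (shiftMonoid n Pset m)) ∧
    (VeryAmplePoly n Pset ↔
      ∀ m ∈ latticePts n Pset,
        coeR n m ∈ Set.extremePoints ℝ (polyHull n Pset) →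
        SaturatedIn n (shiftMonoid n Pset m)) :=
  stmt_18_general n Pset
end
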